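/- Let D ⊆ ℝ² be open with t ≠ 0 and t̄ ≠ 0 at every point of D, let α, β ∈ ℂ, and let q̄, r̄ : D → ℂ be C² functions satisfying: (i) ∂²q̄/∂t∂t̄ = 4q̄ + 4q̄r̄·(∂q̄/∂t) and ∂²r̄/∂t∂t̄ = 4r̄ − 4q̄r̄·(∂r̄/∂t); (ii) the similarity conditions t̄·(∂q̄/∂t̄) = t·(∂q̄/∂t) + 2β·q̄ and t̄·(∂r̄/∂t̄) = t·(∂r̄/∂t) − (2β+1)·r̄; (iii) 4q̄r̄ = 2(β − α)/t̄ + (t/t̄)·(∂q̄/∂t)·(∂r̄/∂t). Then on D: ∂²q̄/∂t² = (4t̄/t)·q̄ − ((2α+1)/t)·(∂q̄/∂t) + (∂q̄/∂t)²·(∂r̄/∂t) and ∂²r̄/∂t² = (4t̄/t)·r̄ + (2α/t)·(∂r̄/∂t) − (∂q̄/∂t)·(∂r̄/∂t)². -/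

import Mathlib

/-!
Differentiating the similarity condition `t̄ ∂_t̄ f = t ∂_t f + c f` in `t` gives
`t̄ ∂_t ∂_t̄ f = (1 + c) ∂_t f + t ∂_t² f`. For `f = q̄, r̄` the left side is known from the
field equations (i), and the product `4 q̄ r̄` occurring there is eliminated with the constraint (iii);
solving for `∂_t² f` (using `t ≠ 0`) gives the two equations.
-/

noncomputable def pd1 (f : ℝ × ℝ → ℂ) : ℝ × ℝ → ℂ :=
  fun p => fderiv ℝ f p ((1 : ℝ), (0 : ℝ))

noncomputable def pd2 (f : ℝ × ℝ → ℂ) : ℝ × ℝ → ℂ :=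
  fun p => fderiv ℝ f p ((0 : ℝ), (1 : ℝ))

open Filter Topology

section PartialDerivatives

variable {f g : ℝ × ℝ → ℂ} {p : ℝ × ℝ}

lemma Filter.EventuallyEq.pd1_eq (h : f =ᶠ[𝓝 p] g) : pd1 f p = pd1 g p := by
  simp only [pd1, h.fderiv_eq]

lemma HasFDerivAt.pd1_eq {L : ℝ × ℝ →L[ℝ] ℂ} (h : HasFDerivAt f L p) : pd1 f p = L (1, 0) := by
  rw [pd1, h.fderiv]

lemma pd1_add (hf : DifferentiableAt ℝ f p) (hg : DifferentiableAt ℝ g p) :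
    pd1 (fun x => f x + g x) p = pd1 f p + pd1 g p :=
  (hf.hasFDerivAt.add hg.hasFDerivAt).pd1_eq

lemma pd1_const_mul (hf : DifferentiableAt ℝ f p) (c : ℂ) :
    pd1 (fun x => c * f x) p = c * pd1 f p :=
  (hf.hasFDerivAt.const_mul c).pd1_eq

lemma pd1_ofReal_fst_mul (hf : DifferentiableAt ℝ f p) :
    pd1 (fun x => (x.1 : ℂ) * f x) p = f p + p.1 * pd1 f p := by
  have hfst : HasFDerivAt (fun x : ℝ × ℝ => (x.1 : ℂ))
      (Complex.ofRealCLM.comp (.fst ℝ ℝ ℝ)) p :=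
    (Complex.ofRealCLM.comp (.fst ℝ ℝ ℝ)).hasFDerivAt
  refine (hfst.mul hf.hasFDerivAt).pd1_eq.trans ?_
  simp [pd1, add_comm]

lemma pd1_ofReal_snd_mul (hf : DifferentiableAt ℝ f p) :
    pd1 (fun x => (x.2 : ℂ) * f x) p = p.2 * pd1 f p := by
  have hsnd : HasFDerivAt (fun x : ℝ × ℝ => (x.2 : ℂ))
      (Complex.ofRealCLM.comp (.snd ℝ ℝ ℝ)) p :=
    (Complex.ofRealCLM.comp (.snd ℝ ℝ ℝ)).hasFDerivAt
  refine (hsnd.mul hf.hasFDerivAt).pd1_eq.trans ?_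
  simp [pd1]

lemma ContDiffAt.differentiableAt_fderiv_apply (hf : ContDiffAt ℝ 2 f p) (v : ℝ × ℝ) :
    DifferentiableAt ℝ (fun x => fderiv ℝ f x v) p :=
  ((hf.fderiv_right (by norm_num)).clm_apply contDiffAt_const).differentiableAt one_ne_zero

lemma pd1_pd2_of_similarity (hf : ContDiffAt ℝ 2 f p) (c : ℂ)
    (hsim : ∀ᶠ x in 𝓝 p, (x.2 : ℂ) * pd2 f x = x.1 * pd1 f x + c * f x) :
    (p.2 : ℂ) * pd1 (pd2 f) p = pd1 f p + p.1 * pd1 (pd1 f) p + c * pd1 f p := by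
  have hd1 : DifferentiableAt ℝ (pd1 f) p := hf.differentiableAt_fderiv_apply _
  have hd2 : DifferentiableAt ℝ (pd2 f) p := hf.differentiableAt_fderiv_apply _
  have hdf : DifferentiableAt ℝ f p := hf.differentiableAt two_ne_zero
  have h := Filter.EventuallyEq.pd1_eq hsim
  rw [pd1_ofReal_snd_mul hd2, pd1_add _ (hdf.const_mul c), pd1_ofReal_fst_mul hd1,
    pd1_const_mul hdf] at h
  · linear_combination h
  · fun_prop

end PartialDerivatives

theorem mPLR_similarity_second_order
    (D : Set (ℝ × ℝ)) (hD : IsOpen D)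
    (ht : ∀ p ∈ D, p.1 ≠ 0) (htb : ∀ p ∈ D, p.2 ≠ 0)
    (α β : ℂ) (qb rb : ℝ × ℝ → ℂ)
    (hqb : ContDiffOn ℝ 2 qb D) (hrb : ContDiffOn ℝ 2 rb D)
    (hpde : ∀ p ∈ D,
      pd1 (pd2 qb) p = 4 * qb p + 4 * qb p * rb p * pd1 qb p ∧
      pd1 (pd2 rb) p = 4 * rb p - 4 * qb p * rb p * pd1 rb p)
    (hsim : ∀ p ∈ D,
      (p.2 : ℂ) * pd2 qb p = (p.1 : ℂ) * pd1 qb p + 2 * β * qb p ∧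
      (p.2 : ℂ) * pd2 rb p = (p.1 : ℂ) * pd1 rb p - (2 * β + 1) * rb p)
    (hconstr : ∀ p ∈ D,
      4 * qb p * rb p
        = 2 * (β - α) / (p.2 : ℂ)
          + ((p.1 : ℂ) / (p.2 : ℂ)) * pd1 qb p * pd1 rb p) :
    ∀ p ∈ D,
      pd1 (pd1 qb) p
        = (4 * (p.2 : ℂ) / (p.1 : ℂ)) * qb p
          - ((2 * α + 1) / (p.1 : ℂ)) * pd1 qb p
          + (pd1 qb p) ^ 2 * pd1 rb p ∧
      pd1 (pd1 rb) p
        = (4 * (p.2 : ℂ) / (p.1 : ℂ)) * rb p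
          + (2 * α / (p.1 : ℂ)) * pd1 rb p
          - pd1 qb p * (pd1 rb p) ^ 2 := by
  intro p hp
  have hnhds : D ∈ 𝓝 p := hD.mem_nhds hp
  have ht' : (p.1 : ℂ) ≠ 0 := Complex.ofReal_ne_zero.mpr (ht p hp)
  have htb' : (p.2 : ℂ) ≠ 0 := Complex.ofReal_ne_zero.mpr (htb p hp)
  have hq := pd1_pd2_of_similarity (hqb.contDiffAt hnhds) (2 * β)
    (eventually_of_mem hnhds fun x hx => (hsim x hx).1)
  have hr := pd1_pd2_of_similarity (hrb.contDiffAt hnhds) (-(2 * β + 1))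
    (eventually_of_mem hnhds fun x hx => by linear_combination (hsim x hx).2)
  obtain ⟨hpq, hpr⟩ := hpde p hp
  have hc : (p.2 : ℂ) * (4 * qb p * rb p) = 2 * (β - α) + p.1 * pd1 qb p * pd1 rb p := by
    rw [hconstr p hp]; field_simp
  constructor
  · field_simp
    linear_combination (p.2 : ℂ) * hpq + pd1 qb p * hc - hq
  · field_simp
    linear_combination (p.2 : ℂ) * hpr - pd1 rb p * hc - hr
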